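/- Let p ∈ (0,1) and let X = (X_i)_{i∈ℤ} be i.i.d. Bernoulli(p). For fixed n, define a marker to be an interval [j, j+2n+1] with X_i = 0 for all i ∈ [j, j+2n] and X_{j+2n+1} = 1, and a filler to be a maximal nonempty interval between two consecutive markers. Then conditioned on the set of marker locations, the restrictions of X to the distinct filler intervals are mutually independent, and the conditional law of X on each filler interval of length ℓ is that of ℓ i.i.d. Bernoulli(p) variables conditioned to contain no marker; in particular, on a filler of length exactly n the conditional law is exactly that of n i.i.d. Bernoulli(p) variables. -/

import Mathlib

open MeasureTheory ProbabilityTheory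
open scoped Classical

/-- Bernoulli(p) mass function on `Fin 2`. -/
def bernFn (p : ℝ) (a : Fin 2) : ℝ := if a = 1 then p else 1 - p

/-- `x` has a marker (2n+1 zeros followed by a one) starting at position `j`. -/
def markerAt (n : ℕ) (x : ℤ → Fin 2) (j : ℤ) : Prop :=
  (∀ i ∈ Finset.Icc j (j + 2 * n), x i = 0) ∧ x (j + 2 * n + 1) = 1

/-- `j < j'` are consecutive elements of the set `S` of marker locations. -/
def consecIn (S : Finset ℤ) (j j' : ℤ) : Prop :=
  j ∈ S ∧ j' ∈ S ∧ j < j' ∧ ∀ k ∈ S, ¬(j < k ∧ k < j')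

/-- The filler interval strictly between the markers starting at `j` and at `j'`. -/
noncomputable def fillerOf (n : ℕ) (t : ℤ × ℤ) : Finset ℤ :=
  Finset.Icc (t.1 + 2 * n + 2) (t.2 - 1)

/-- The string `v` contains no marker fully inside the finite interval `F`. -/
def noMarkerIn (n : ℕ) (v : ℤ → Fin 2) (F : Finset ℤ) : Prop :=
  ¬∃ i : ℤ, Finset.Icc i (i + 2 * n + 1) ⊆ F ∧
    (∀ k ∈ Finset.Icc i (i + 2 * n), v k = 0) ∧ v (i + 2 * n + 1) = 1

/-- The Bernoulli(p) weight of the values `v` on the filler of `t`, which is zero if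
`v` contains a marker there (an impossible configuration for a filler). -/
noncomputable def fillerWeight (p : ℝ) (n : ℕ) (v : ℤ → Fin 2) (t : ℤ × ℤ) : ℝ :=
  if noMarkerIn n v (fillerOf n t) then ∏ i : fillerOf n t, bernFn p (v i) else 0

/-- The normalizing constant: total Bernoulli(p) weight of the length-|filler| strings
containing no marker. -/
noncomputable def fillerZ (p : ℝ) (n : ℕ) (t : ℤ × ℤ) : ℝ :=
  ∑ u : fillerOf n t → Fin 2,
    if noMarkerIn n (fun i => if h : i ∈ fillerOf n t then u ⟨i, h⟩ else 1)
        (fillerOf n t)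
      then ∏ i : fillerOf n t, bernFn p (u i) else 0

/-!
Markers cannot overlap: the final `1` of a marker would fall into the zero block of a marker
starting within its span. So on the event that the markers in the window are exactly `S`, a
marker of the sequence that meets the filler between two consecutive markers lies inside it.
Consequently, that event (together with prescribed values on the other fillers) is the
intersection of an event in the coordinates off one filler with "no marker inside this filler",
and independence of disjoint blocks of coordinates yields the conditional law of that filler.
Induction over the fillers gives the product formula. A filler with fewer than `2n + 2` sites,
in particular a fitted one, has no room for a marker, so its normalizing constant is `1`.
-/

def IsMarkerSet (n m : ℕ) (S : Finset ℤ) (x : ℤ → Fin 2) : Prop :=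
  ∀ j ∈ Finset.Icc (-(m:ℤ)) m, (markerAt n x j ↔ j ∈ S)

section MarkerSets

variable {n : ℕ} {x : ℤ → Fin 2}

lemma markerAt_dependsOn (n : ℕ) (j : ℤ) :
    DependsOn (fun x => markerAt n x j) (Set.Icc j (j + 2 * n + 1)) := by
  intro x y h
  have hzero : ∀ i ∈ Finset.Icc j (j + 2 * (n:ℤ)), x i = y i := fun i hi =>
    h i (by simp only [Finset.mem_Icc] at hi; exact ⟨hi.1, by omega⟩)
  simp only [markerAt, eq_iff_iff]
  exact and_congr (forall₂_congr fun i hi => by rw [hzero i hi]) (by rw [h _ ⟨by omega, le_rfl⟩])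

lemma markerAt_lt_of_lt {j k : ℤ} (hj : markerAt n x j) (hk : markerAt n x k) (hjk : j < k) :
    j + 2 * n + 1 < k := by
  by_contra! hkj
  have := hk.1 (j + 2 * n + 1) (by simp only [Finset.mem_Icc]; omega)
  rw [hj.2] at this
  exact absurd this (by decide)

lemma not_markerAt_const_one (n : ℕ) (j : ℤ) : ¬markerAt n (fun _ => 1) j := fun h =>
  one_ne_zero (h.1 j (by simp))

lemma noMarkerIn_iff {F : Finset ℤ} :
    noMarkerIn n x F ↔ ∀ i : ℤ, Finset.Icc i (i + 2 * n + 1) ⊆ F → ¬markerAt n x i :=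
  ⟨fun h i hi hm => h ⟨i, hi, hm⟩, fun h ⟨i, hi, hm⟩ => h i hi hm⟩

lemma noMarkerIn_dependsOn (n : ℕ) (F : Finset ℤ) :
    DependsOn (fun x => noMarkerIn n x F) F := by
  intro x y h
  simp only [noMarkerIn_iff, eq_iff_iff]
  refine forall_congr' fun i => imp_congr_right fun hi => not_congr
    (markerAt_dependsOn n i fun k hk => h k ?_).to_iff
  exact Finset.mem_coe.mpr (hi (by simpa using hk))

lemma noMarkerIn_of_card_lt {F : Finset ℤ} (hF : F.card < 2 * n + 2) : noMarkerIn n x F := by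
  rintro ⟨i, hi, -⟩
  have := Finset.card_le_card hi
  rw [Int.card_Icc] at this
  omega

lemma noMarkerIn_piecewise_one (F : Finset ℤ) : noMarkerIn n (F.piecewise (fun _ => 1) x) F :=
  ((noMarkerIn_dependsOn n F) fun i hi => by simp [Finset.mem_coe.mp hi]).mpr
    (noMarkerIn_iff.mpr fun i _ => not_markerAt_const_one n i)

end MarkerSets

section Fillers

variable {n m : ℕ} {S : Finset ℤ} {t : ℤ × ℤ} {x : ℤ → Fin 2}

lemma consecIn.fillerOf_subset (hS : ↑S ⊆ Set.Icc (-(m:ℤ)) m) (ht : consecIn S t.1 t.2) :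
    fillerOf n t ⊆ Finset.Icc (-(m:ℤ)) m := by
  intro i hi
  have h1 := hS ht.1
  have h2 := hS ht.2.1
  simp only [Set.mem_Icc] at h1 h2
  simp only [fillerOf, Finset.mem_Icc] at hi ⊢
  omega

lemma consecIn.disjoint_fillerOf {t' : ℤ × ℤ} (ht : consecIn S t.1 t.2)
    (ht' : consecIn S t'.1 t'.2) (hne : t ≠ t') :
    Disjoint (fillerOf n t) (fillerOf n t') := by
  wlog hlt : t.1 < t'.1 generalizing t t'
  · rcases (not_lt.mp hlt).lt_or_eq with hlt' | heq
    · exact (this ht' ht hne.symm hlt').symm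
    · have : t.2 = t'.2 := by
        by_contra! h
        rcases h.lt_or_gt with h | h
        · exact ht'.2.2.2 t.2 ht.2.1 ⟨heq ▸ ht.2.2.1, h⟩
        · exact ht.2.2.2 t'.2 ht'.2.1 ⟨heq.symm ▸ ht'.2.2.1, h⟩
      exact absurd (Prod.ext heq.symm this) hne
  have hle : t.2 ≤ t'.1 := not_lt.mp fun h => ht.2.2.2 t'.1 ht'.1 ⟨hlt, h⟩
  rw [Finset.disjoint_left]
  intro i hi hi'
  simp only [fillerOf, Finset.mem_Icc] at hi hi'
  omega

lemma IsMarkerSet.markerAt_of_mem (hx : IsMarkerSet n m S x) (hS : ↑S ⊆ Set.Icc (-(m:ℤ)) m)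
    {j : ℤ} (hj : j ∈ S) : markerAt n x j :=
  (hx j (by simpa using hS hj)).mpr hj

lemma isMarkerSet_dependsOn (n m : ℕ) (S : Finset ℤ) :
    DependsOn (IsMarkerSet n m S) (Set.Icc (-(m:ℤ)) (m + 2 * n + 1)) := by
  intro x y h
  simp only [IsMarkerSet, eq_iff_iff]
  refine forall₂_congr fun j hj => iff_congr (markerAt_dependsOn n j fun i hi => h i ?_).to_iff
    Iff.rfl
  simp only [Finset.mem_Icc, Set.mem_Icc] at hj hi ⊢
  omega

lemma IsMarkerSet.noMarkerIn_fillerOf (hx : IsMarkerSet n m S x)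
    (hS : ↑S ⊆ Set.Icc (-(m:ℤ)) m) (ht : consecIn S t.1 t.2) :
    noMarkerIn n x (fillerOf n t) := by
  refine noMarkerIn_iff.mpr fun i hi hm => ?_
  have hiF : i ∈ fillerOf n t := hi (Finset.mem_Icc.mpr ⟨le_rfl, by omega⟩)
  have hiS : i ∈ S := (hx i (ht.fillerOf_subset hS hiF)).mp hm
  simp only [fillerOf, Finset.mem_Icc] at hiF
  exact ht.2.2.2 i hiS ⟨by omega, by omega⟩

/-- A marker of `y` meeting the filler cannot overlap the two bounding markers (markers are
disjoint), so it would lie inside the filler. -/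
lemma IsMarkerSet.of_eqOn_compl_fillerOf (hx : IsMarkerSet n m S x)
    (hS : ↑S ⊆ Set.Icc (-(m:ℤ)) m) (ht : consecIn S t.1 t.2) {y : ℤ → Fin 2}
    (hxy : ∀ i ∉ fillerOf n t, x i = y i) (hy : noMarkerIn n y (fillerOf n t)) :
    IsMarkerSet n m S y := by
  obtain ⟨ha, hb, -, hcons⟩ := ht
  have hagree {j : ℤ} (hj : j + 2 * n + 1 < t.1 + 2 * n + 2 ∨ t.2 ≤ j) :
      markerAt n x j ↔ markerAt n y j := by
    refine (markerAt_dependsOn n j fun i hi => hxy i ?_).to_iff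
    simp only [Set.mem_Icc] at hi
    simp only [fillerOf, Finset.mem_Icc]
    omega
  have hya : markerAt n y t.1 := (hagree (Or.inl (by omega))).mp (hx.markerAt_of_mem hS ha)
  have hyb : markerAt n y t.2 := (hagree (Or.inr le_rfl)).mp (hx.markerAt_of_mem hS hb)
  intro j hj
  by_cases hout : j + 2 * n + 1 < t.1 + 2 * n + 2 ∨ t.2 ≤ j
  · exact (hagree hout).symm.trans (hx j hj)
  push Not at hout
  have hjS : j ∉ S := fun hjS => hcons j hjS ⟨by omega, by omega⟩
  simp only [hjS, iff_false]
  intro hyj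
  have h1 := markerAt_lt_of_lt hya hyj (by omega)
  have h2 := markerAt_lt_of_lt hyj hyb (by omega)
  refine noMarkerIn_iff.mp hy j (fun i hi => ?_) hyj
  simp only [fillerOf, Finset.mem_Icc] at hi ⊢
  omega

lemma consecIn.isMarkerSet_iff (hS : ↑S ⊆ Set.Icc (-(m:ℤ)) m) (ht : consecIn S t.1 t.2) :
    IsMarkerSet n m S x ↔
      IsMarkerSet n m S ((fillerOf n t).piecewise (fun _ => 1) x) ∧
        noMarkerIn n x (fillerOf n t) :=
  ⟨fun hx => ⟨hx.of_eqOn_compl_fillerOf hS ht (fun i hi => by simp [hi])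
      (noMarkerIn_piecewise_one _), hx.noMarkerIn_fillerOf hS ht⟩,
    fun ⟨h1, h2⟩ => h1.of_eqOn_compl_fillerOf hS ht (fun i hi => by simp [hi]) h2⟩

end Fillers

lemma setOf_eq_preimage_coords {ι Ω : Type*} [DecidableEq ι] {X : ι → Ω → Fin 2}
    {A : (ι → Fin 2) → Prop} {F : Finset ι} (hA : DependsOn A F) :
    {ω | A (fun i => X i ω)} =
      (fun ω (i : F) => X i ω) ⁻¹' {u | A (fun i => if h : i ∈ F then u ⟨i, h⟩ else 1)} := by
  ext ω
  exact (hA fun i hi => by simp [Finset.mem_coe.mp hi]).to_iff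

section Coordinates

variable {ι Ω : Type*} [MeasurableSpace Ω] {μ : Measure Ω} [IsProbabilityMeasure μ] {p : ℝ}
  {X : ι → Ω → Fin 2}

lemma measure_coords_eq_singleton (hXi : iIndepFun X μ)
    (hXd : ∀ (i : ι) (a : Fin 2), (μ {ω | X i ω = a}).toReal = bernFn p a)
    (F : Finset ι) (u : F → Fin 2) :
    μ ((fun ω (i : F) => X i ω) ⁻¹' {u}) = ENNReal.ofReal (∏ i : F, bernFn p (u i)) := by
  have hind : iIndepFun (fun (i : F) => X i) μ := hXi.precomp Subtype.val_injective
  have hset : (fun ω (i : F) => X i ω) ⁻¹' {u} = ⋂ i ∈ (Finset.univ : Finset F), X i ⁻¹' {u i} := by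
    ext ω; simp [funext_iff]
  rw [hset, hind.measure_inter_preimage_eq_mul _ (fun i _ => measurableSet_singleton _),
    ENNReal.ofReal_prod_of_nonneg (fun i _ => hXd i (u i) ▸ ENNReal.toReal_nonneg)]
  refine Finset.prod_congr rfl fun i _ => ?_
  rw [← hXd i (u i), ENNReal.ofReal_toReal (measure_ne_top μ _)]
  rfl

lemma measure_coords_eq_sum [DecidableEq ι] (hXm : ∀ i, Measurable (X i)) (hXi : iIndepFun X μ)
    (hXd : ∀ (i : ι) (a : Fin 2), (μ {ω | X i ω = a}).toReal = bernFn p a)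
    (F : Finset ι) (P : (F → Fin 2) → Prop) :
    μ ((fun ω (i : F) => X i ω) ⁻¹' {u | P u}) =
      ENNReal.ofReal (∑ u, if P u then ∏ i : F, bernFn p (u i) else 0) := by
  have hmeas : Measurable (fun ω (i : F) => X i ω) := measurable_pi_lambda _ fun i => hXm i
  have hnonneg (u : F → Fin 2) : 0 ≤ ∏ i : F, bernFn p (u i) :=
    Finset.prod_nonneg fun i _ => hXd i (u i) ▸ ENNReal.toReal_nonneg
  calc μ ((fun ω (i : F) => X i ω) ⁻¹' {u | P u})
      = ∑ u ∈ {u | P u}.toFinset, μ ((fun ω (i : F) => X i ω) ⁻¹' {u}) := by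
        rw [sum_measure_preimage_singleton _ fun u _ => hmeas (measurableSet_singleton u),
          Set.coe_toFinset]
    _ = ∑ u ∈ {u | P u}.toFinset, ENNReal.ofReal (∏ i : F, bernFn p (u i)) :=
        Finset.sum_congr rfl fun u _ => measure_coords_eq_singleton hXi hXd F u
    _ = _ := by
        rw [← ENNReal.ofReal_sum_of_nonneg fun u _ => hnonneg u, ← Finset.sum_filter]
        congr 2
        ext; simp

lemma measure_and_coords_mul [DecidableEq ι] (hXm : ∀ i, Measurable (X i)) (hXi : iIndepFun X μ)
    (hXd : ∀ (i : ι) (a : Fin 2), (μ {ω | X i ω = a}).toReal = bernFn p a)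
    {J F : Finset ι} (hJF : Disjoint J F) {A R : (ι → Fin 2) → Prop}
    (hA : DependsOn A J) (hR : DependsOn R F) (y : ι → Fin 2) :
    μ {ω | (A (fun i => X i ω) ∧ R (fun i => X i ω)) ∧ ∀ i ∈ F, X i ω = y i} *
        ENNReal.ofReal (∑ u : F → Fin 2,
          if R (fun i => if h : i ∈ F then u ⟨i, h⟩ else 1) then ∏ i : F, bernFn p (u i) else 0)
      = μ {ω | A (fun i => X i ω) ∧ R (fun i => X i ω)} *
        ENNReal.ofReal (if R y then ∏ i : F, bernFn p (y i) else 0) := by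
  have hindep (s : Set (J → Fin 2)) (t : Set (F → Fin 2)) :=
    (hXi.indepFun_finset J F hJF hXm).measure_inter_preimage_eq_mul s t
      MeasurableSet.of_discrete MeasurableSet.of_discrete
  have hcyl : {ω | ∀ i ∈ F, X i ω = y i} = (fun ω (i : F) => X i ω) ⁻¹' {fun (i : F) => y i} := by
    ext ω; simp [funext_iff]
  have hAR : {ω | A (fun i => X i ω) ∧ R (fun i => X i ω)} =
      {ω | A (fun i => X i ω)} ∩ {ω | R (fun i => X i ω)} := rfl
  rw [hAR, setOf_eq_preimage_coords hA, setOf_eq_preimage_coords hR, hindep,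
    measure_coords_eq_sum hXm hXi hXd F]
  by_cases hRy : R y
  · have hcut : {ω | (A (fun i => X i ω) ∧ R (fun i => X i ω)) ∧ ∀ i ∈ F, X i ω = y i} =
        {ω | A (fun i => X i ω)} ∩ {ω | ∀ i ∈ F, X i ω = y i} := by
      ext ω
      simp only [Set.mem_ofPred_eq, Set.mem_inter_iff]
      exact ⟨fun h => ⟨h.1.1, h.2⟩, fun h => ⟨⟨h.1, (hR fun i hi => h.2 i hi).symm ▸ hRy⟩, h.2⟩⟩
    rw [hcut, setOf_eq_preimage_coords hA, hcyl, hindep,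
      measure_coords_eq_singleton hXi hXd, if_pos hRy]
    ring
  · have hempty : {ω | (A (fun i => X i ω) ∧ R (fun i => X i ω)) ∧ ∀ i ∈ F, X i ω = y i} = ∅ := by
      ext ω
      simp only [Set.mem_ofPred_eq, Set.mem_empty_iff_false, iff_false]
      exact fun h => hRy ((hR fun i hi => h.2 i hi) ▸ h.1.2)
    simp [hempty, hRy]

end Coordinates

lemma bernFn_zero_add_one (p : ℝ) : bernFn p 0 + bernFn p 1 = 1 := by
  simp [bernFn]

lemma fillerZ_eq_one_of_card_lt {n : ℕ} {t : ℤ × ℤ} (p : ℝ)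
    (h : (fillerOf n t).card < 2 * n + 2) : fillerZ p n t = 1 := by
  simp only [fillerZ, if_pos (noMarkerIn_of_card_lt h), ← Fintype.prod_sum, Fin.sum_univ_two,
    bernFn_zero_add_one, Finset.prod_const_one]

lemma fillerZ_nonneg {p : ℝ} (hbern : ∀ a, 0 ≤ bernFn p a) (n : ℕ) (t : ℤ × ℤ) :
    0 ≤ fillerZ p n t :=
  Finset.sum_nonneg fun _ _ => by
    split_ifs
    exacts [Finset.prod_nonneg fun _ _ => hbern _, le_rfl]

lemma fillerWeight_nonneg {p : ℝ} (hbern : ∀ a, 0 ≤ bernFn p a) (n : ℕ) (v : ℤ → Fin 2)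
    (t : ℤ × ℤ) : 0 ≤ fillerWeight p n v t := by
  unfold fillerWeight
  split_ifs
  exacts [Finset.prod_nonneg fun _ _ => hbern _, le_rfl]

section FillerLaw

variable {Ω : Type*} [MeasurableSpace Ω] {μ : Measure Ω} [IsProbabilityMeasure μ] {p : ℝ}
  {X : ℤ → Ω → Fin 2} {n m : ℕ} {S : Finset ℤ}

lemma measure_fillers_insert_mul_fillerZ (hXm : ∀ i, Measurable (X i)) (hXi : iIndepFun X μ)
    (hXd : ∀ (i : ℤ) (a : Fin 2), (μ {ω | X i ω = a}).toReal = bernFn p a)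
    (hS : ↑S ⊆ Set.Icc (-(m:ℤ)) m) {t₀ : ℤ × ℤ} (ht₀ : consecIn S t₀.1 t₀.2)
    {T : Finset (ℤ × ℤ)} (hT : ∀ t ∈ T, consecIn S t.1 t.2) (ht₀T : t₀ ∉ T) (v : ℤ → Fin 2) :
    μ ({ω | IsMarkerSet n m S (fun i => X i ω)} ∩
        {ω | ∀ t ∈ insert t₀ T, ∀ i ∈ fillerOf n t, X i ω = v i}) * ENNReal.ofReal (fillerZ p n t₀)
      = μ ({ω | IsMarkerSet n m S (fun i => X i ω)} ∩
        {ω | ∀ t ∈ T, ∀ i ∈ fillerOf n t, X i ω = v i}) *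
          ENNReal.ofReal (fillerWeight p n v t₀) := by
  set F₀ := fillerOf n t₀
  -- the part of the event seen off `F₀`: overwrite `F₀` by the marker-free word `1⋯1`
  set A : (ℤ → Fin 2) → Prop := fun x =>
    IsMarkerSet n m S (F₀.piecewise (fun _ => 1) x) ∧ ∀ t ∈ T, ∀ i ∈ fillerOf n t, x i = v i
  have hT_window : ∀ t ∈ T, ∀ i ∈ fillerOf n t,
      i ∈ Finset.Icc (-(m:ℤ)) (m + 2 * n + 1) \ F₀ := by
    intro t ht i hi
    have hiW := Finset.mem_Icc.mp ((hT t ht).fillerOf_subset hS hi)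
    have hne : t ≠ t₀ := fun h => ht₀T (h ▸ ht)
    refine Finset.mem_sdiff.mpr ⟨Finset.mem_Icc.mpr ⟨hiW.1, by omega⟩, fun hi₀ => ?_⟩
    exact Finset.disjoint_left.mp ((hT t ht).disjoint_fillerOf ht₀ hne) hi hi₀
  have hA : DependsOn A ↑(Finset.Icc (-(m:ℤ)) (m + 2 * n + 1) \ F₀) := by
    intro x y h
    have hpw : IsMarkerSet n m S (F₀.piecewise (fun _ => 1) x) =
        IsMarkerSet n m S (F₀.piecewise (fun _ => 1) y) := by
      refine isMarkerSet_dependsOn n m S fun i hi => ?_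
      by_cases hi₀ : i ∈ F₀
      · simp [hi₀]
      · simp only [Finset.piecewise_eq_of_notMem _ _ _ hi₀]
        exact h i (Finset.mem_sdiff.mpr ⟨Finset.mem_Icc.mpr hi, hi₀⟩)
    simp only [A, hpw, eq_iff_iff]
    exact and_congr_right' (forall₂_congr fun t ht => forall₂_congr fun i hi => by
      rw [h i (hT_window t ht i hi)])
  have hsplit (x : ℤ → Fin 2) : (IsMarkerSet n m S x ∧ ∀ t ∈ T, ∀ i ∈ fillerOf n t, x i = v i) ↔
      A x ∧ noMarkerIn n x F₀ := by
    rw [ht₀.isMarkerSet_iff hS]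
    tauto
  have hset₀ : {ω | IsMarkerSet n m S (fun i => X i ω)} ∩
      {ω | ∀ t ∈ T, ∀ i ∈ fillerOf n t, X i ω = v i} =
        {ω | A (fun i => X i ω) ∧ noMarkerIn n (fun i => X i ω) F₀} := by
    ext ω; exact hsplit _
  have hset : {ω | IsMarkerSet n m S (fun i => X i ω)} ∩
      {ω | ∀ t ∈ insert t₀ T, ∀ i ∈ fillerOf n t, X i ω = v i} =
        {ω | (A (fun i => X i ω) ∧ noMarkerIn n (fun i => X i ω) F₀) ∧
          ∀ i ∈ F₀, X i ω = v i} := by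
    ext ω
    simp only [Set.mem_inter_iff, Set.mem_ofPred_eq, Finset.forall_mem_insert, ← hsplit]
    tauto
  rw [hset, hset₀, fillerZ, fillerWeight]
  exact measure_and_coords_mul hXm hXi hXd Finset.sdiff_disjoint hA
    (noMarkerIn_dependsOn n F₀) v

lemma measure_fillers_mul_prod_fillerZ (hXm : ∀ i, Measurable (X i)) (hXi : iIndepFun X μ)
    (hXd : ∀ (i : ℤ) (a : Fin 2), (μ {ω | X i ω = a}).toReal = bernFn p a)
    (hS : ↑S ⊆ Set.Icc (-(m:ℤ)) m) {T : Finset (ℤ × ℤ)} (hT : ∀ t ∈ T, consecIn S t.1 t.2)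
    (v : ℤ → Fin 2) :
    μ ({ω | IsMarkerSet n m S (fun i => X i ω)} ∩
        {ω | ∀ t ∈ T, ∀ i ∈ fillerOf n t, X i ω = v i}) * ENNReal.ofReal (∏ t ∈ T, fillerZ p n t)
      = μ {ω | IsMarkerSet n m S (fun i => X i ω)} *
          ENNReal.ofReal (∏ t ∈ T, fillerWeight p n v t) := by
  have hbern (a : Fin 2) : 0 ≤ bernFn p a := hXd 0 a ▸ ENNReal.toReal_nonneg
  induction T using Finset.induction_on with
  | empty => simp
  | insert t₀ T ht₀T ih =>
    have hT' := fun t ht => hT t (Finset.mem_insert_of_mem ht)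
    rw [Finset.prod_insert ht₀T, Finset.prod_insert ht₀T,
      ENNReal.ofReal_mul (fillerZ_nonneg hbern n t₀),
      ENNReal.ofReal_mul (fillerWeight_nonneg hbern n v t₀), ← mul_assoc,
      measure_fillers_insert_mul_fillerZ hXm hXi hXd hS (hT t₀ (Finset.mem_insert_self _ _))
        hT' ht₀T v, mul_right_comm, ih hT']
    ring

end FillerLaw

theorem stmt12_general {Ω : Type*} [MeasurableSpace Ω] (μ : Measure Ω) [IsProbabilityMeasure μ]
    (p : ℝ) (n : ℕ)
    (X : ℤ → Ω → Fin 2) (hXm : ∀ i, Measurable (X i))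
    (hXi : iIndepFun X μ)
    (hXd : ∀ (i : ℤ) (a : Fin 2), (μ {ω | X i ω = a}).toReal = bernFn p a)
    (m : ℕ) (S : Finset ℤ) (hS : ↑S ⊆ Set.Icc (-(m:ℤ)) m)
    (E : Set Ω)
    (hE : E = {ω | ∀ j ∈ Finset.Icc (-(m:ℤ)) (m:ℤ),
      (markerAt n (fun i => X i ω) j ↔ j ∈ S)})
    (T : Finset (ℤ × ℤ))
    (hT : ∀ t ∈ T, consecIn S t.1 t.2 ∧ (fillerOf n t).Nonempty)
    (v : ℤ → Fin 2) :
    μ (E ∩ {ω | ∀ t ∈ T, ∀ i ∈ fillerOf n t, X i ω = v i})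
        * ENNReal.ofReal (∏ t ∈ T, fillerZ p n t)
      = μ E * ENNReal.ofReal (∏ t ∈ T, fillerWeight p n v t) ∧
    (∀ t ∈ T, (fillerOf n t).card = n → fillerZ p n t = 1) := by
  subst hE
  exact ⟨measure_fillers_mul_prod_fillerZ hXm hXi hXd hS (fun t ht => (hT t ht).1) v,
    fun t _ hcard => fillerZ_eq_one_of_card_lt p (by omega)⟩

/-- marker–filler independence, Keane–Smorodinsky: for i.i.d.
Bernoulli(p) variables `X` indexed by ℤ, conditioned on the marker locations in a
window being exactly `S`, the restrictions of `X` to the distinct fillers are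
mutually independent, and on each filler the conditional law is i.i.d. Bernoulli(p)
conditioned to contain no marker; this is expressed by the product formula
`μ(E ∩ {X = v on the fillers}) · ∏ Z_t = μ(E) · ∏ w_t(v)`. In particular, a fitted
filler (length exactly n) cannot contain a marker, so there `Z_t = 1` and the
conditional law is exactly i.i.d. Bernoulli(p). -/
theorem stmt12 {Ω : Type*} [MeasurableSpace Ω] (μ : Measure Ω) [IsProbabilityMeasure μ]
    (p : ℝ) (hp : p ∈ Set.Ioo (0:ℝ) 1) (n : ℕ) (hn : 1 ≤ n)
    (X : ℤ → Ω → Fin 2) (hXm : ∀ i, Measurable (X i))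
    (hXi : iIndepFun X μ)
    (hXd : ∀ (i : ℤ) (a : Fin 2), (μ {ω | X i ω = a}).toReal = bernFn p a)
    (m : ℕ) (S : Finset ℤ) (hS : ↑S ⊆ Set.Icc (-(m:ℤ)) m)
    (E : Set Ω)
    (hE : E = {ω | ∀ j ∈ Finset.Icc (-(m:ℤ)) (m:ℤ),
      (markerAt n (fun i => X i ω) j ↔ j ∈ S)})
    (T : Finset (ℤ × ℤ))
    (hT : ∀ t ∈ T, consecIn S t.1 t.2 ∧ (fillerOf n t).Nonempty)
    (v : ℤ → Fin 2) :
    μ (E ∩ {ω | ∀ t ∈ T, ∀ i ∈ fillerOf n t, X i ω = v i})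
        * ENNReal.ofReal (∏ t ∈ T, fillerZ p n t)
      = μ E * ENNReal.ofReal (∏ t ∈ T, fillerWeight p n v t) ∧
    (∀ t ∈ T, (fillerOf n t).card = n → fillerZ p n t = 1) :=
  stmt12_general μ p n X hXm hXi hXd m S hS E hE T hT v
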